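/- The group presented by ⟨a, b | a² = b², ab⁻¹a = ba⁻¹b⟩ is not isomorphic to ℤ. -/

import Mathlib

/-- The free group on two generators. -/
abbrev F : Type := FreeGroup (Fin 2)

/-- The generator `a`. -/
def a : F := FreeGroup.of 0

/-- The generator `b`. -/
def b : F := FreeGroup.of 1

/-- The relator set of `⟨a, b | a² = b², ab⁻¹a = ba⁻¹b⟩`. -/
def rels : Set F := {a ^ 2 * (b ^ 2)⁻¹, a * b⁻¹ * a * (b * a⁻¹ * b)⁻¹}

/-!
The assignment `a ↦ (0 1)`, `b ↦ (0 2)` respects both relations: both squares are trivial, and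
`ab⁻¹a` and `ba⁻¹b` are both the transposition `(1 2)`. So the group maps onto `S₃`, where the
images of `a` and `b` do not commute, while `ℤ` is abelian.
-/

theorem not_nonempty_mulEquiv_of_not_commute_map {G K H : Type*} [Group G] [Group K]
    [CommGroup H] (f : G →* K) {x y : G} (hxy : ¬ Commute (f x) (f y)) :
    ¬ Nonempty (G ≃* H) := by
  rintro ⟨e⟩
  have hcomm : Commute x y := by
    simpa using (Commute.all (e x) (e y)).map e.symm.toMonoidHom
  exact hxy (hcomm.map f)

def transpositionsS3 : Fin 2 → Equiv.Perm (Fin 3) := ![Equiv.swap 0 1, Equiv.swap 0 2]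

theorem lift_transpositionsS3_rels : ∀ r ∈ rels, FreeGroup.lift transpositionsS3 r = 1 := by
  rintro r (rfl | rfl) <;>
    simp only [a, b, map_mul, map_inv, map_pow, FreeGroup.lift_apply_of, transpositionsS3,
      Matrix.cons_val_zero, Matrix.cons_val_one] <;>
    decide

def toS3 : PresentedGroup rels →* Equiv.Perm (Fin 3) :=
  PresentedGroup.toGroup lift_transpositionsS3_rels

theorem not_commute_toS3_of : ¬ Commute (toS3 (.of 0)) (toS3 (.of 1)) := by
  simp only [toS3, PresentedGroup.toGroup.of, transpositionsS3, Matrix.cons_val_zero,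
    Matrix.cons_val_one, commute_iff_eq]
  decide

/-- The group presented by `⟨a, b | a² = b², ab⁻¹a = ba⁻¹b⟩` is not isomorphic to `ℤ`. -/
theorem presentedGroup_63_c3c4c5_not_iso_int :
    ¬ Nonempty (PresentedGroup rels ≃* Multiplicative ℤ) :=
  not_nonempty_mulEquiv_of_not_commute_map toS3 not_commute_toS3_of
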